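/- arXiv:1412.3428 — 2 statements merged into one kernel-verified Lean document; each statement's English description precedes it below -/
import Mathlib

section
/- The group $\mathrm{GL}(n,\mathbb{C})$ acts transitively on triples $(F_0, F_1, L)$ in general position, where $F_0, F_1$ are complete flags in $\mathbb{C}^n$ and $L$ is a line, general position meaning $\dim\langle F_0^{j_0}, F_1^{j_1}\rangle = \min\{j_0+j_1, n\}$ and $\dim\langle F_0^{j_0}, F_1^{j_1}, L\rangle = \min\{j_0+j_1+1, n\}$ for all $0 \leq j_0, j_1 \leq n$. -/
/-- A complete flag in `ℂⁿ`, given as an increasing chain of subspaces with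
`dim Fʲ = j` for `0 ≤ j ≤ n`. -/
def IsCompleteFlag (n : ℕ) (F : ℕ → Submodule ℂ (Fin n → ℂ)) : Prop :=
  (∀ j, F j ≤ F (j + 1)) ∧ ∀ j, j ≤ n → Module.finrank ℂ (F j) = j

/-- General position of a triple (flag, flag, line). -/
def GenPosTriple (n : ℕ) (F0 F1 : ℕ → Submodule ℂ (Fin n → ℂ))
    (L : Submodule ℂ (Fin n → ℂ)) : Prop :=
  ∀ j0 j1 : ℕ, j0 ≤ n → j1 ≤ n →
    Module.finrank ℂ ↥(F0 j0 ⊔ F1 j1) = min (j0 + j1) n ∧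
    Module.finrank ℂ ↥(F0 j0 ⊔ F1 j1 ⊔ L) = min (j0 + j1 + 1) n


/-!
The lines `F0^{i+1} ∩ F1^{n-i}` (`0 ≤ i < n`) span a basis adapted to both flags, unique up
to rescaling each vector. General position of `L` forces every coordinate of a generator of `L`
to be nonzero, so the basis can be rescaled to make `L` the span of the sum of its vectors.
Any two triples in general position thus have normalized bases, and the linear map matching
them carries one triple to the other.
-/

open Module Submodule

section SpanFlag

variable (K : Type*) {V W : Type*} [DivisionRing K] [AddCommGroup V] [Module K V]
  [AddCommGroup W] [Module K W] {n : ℕ}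

def spanFlag (e : Fin n → V) (j : ℕ) : Submodule K V :=
  span K (e '' {i | (i : ℕ) < j})

variable {K}

lemma spanFlag_zero (e : Fin n → V) : spanFlag K e 0 = ⊥ := by
  simp [spanFlag]

lemma spanFlag_succ (e : Fin n → V) {k : ℕ} (hk : k < n) :
    spanFlag K e (k + 1) = spanFlag K e k ⊔ span K {e ⟨k, hk⟩} := by
  have hset : {i : Fin n | (i : ℕ) < k + 1} = insert ⟨k, hk⟩ {i : Fin n | (i : ℕ) < k} := by
    ext i
    simp only [Set.mem_ofPred_eq, Set.mem_insert_iff, Fin.ext_iff]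
    omega
  rw [spanFlag, hset, Set.image_insert_eq, span_insert, sup_comm, spanFlag]

lemma spanFlag_self (e : Fin n → V) : spanFlag K e n = span K (Set.range e) := by
  simp [spanFlag]

lemma map_spanFlag (f : V →ₗ[K] W) (e : Fin n → V) (j : ℕ) :
    (spanFlag K e j).map f = spanFlag K (f ∘ e) j := by
  rw [spanFlag, map_span, ← Set.image_comp, spanFlag]

end SpanFlag

variable {n : ℕ}

lemma IsCompleteFlag.monotone {F : ℕ → Submodule ℂ (Fin n → ℂ)} (hF : IsCompleteFlag n F) :
    Monotone F :=
  monotone_nat_of_le_succ hF.1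

lemma IsCompleteFlag.spanFlag_eq {F : ℕ → Submodule ℂ (Fin n → ℂ)} (hF : IsCompleteFlag n F)
    {e : Fin n → Fin n → ℂ} (hmem : ∀ i : Fin n, e i ∈ F (i + 1))
    (hnotMem : ∀ i : Fin n, e i ∉ F i) : ∀ k ≤ n, spanFlag ℂ e k = F k := by
  intro k
  induction k with
  | zero =>
    intro _
    rw [spanFlag_zero, eq_comm, ← finrank_eq_zero]
    exact hF.2 0 (Nat.zero_le n)
  | succ k ih =>
    intro hk
    rw [spanFlag_succ e hk, ih (by omega)]
    have hle := sup_le (hF.1 k) ((span_singleton_le_iff_mem _ _).2 (hmem ⟨k, hk⟩))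
    refine eq_of_le_of_finrank_le hle ?_
    rw [finrank_sup_span_singleton (hnotMem ⟨k, hk⟩), hF.2 k (by omega), hF.2 (k + 1) hk]

section GenPosTriple

variable {F0 F1 : ℕ → Submodule ℂ (Fin n → ℂ)} {L : Submodule ℂ (Fin n → ℂ)}

lemma GenPosTriple.finrank_inf (hF0 : IsCompleteFlag n F0) (hF1 : IsCompleteFlag n F1)
    (hF : GenPosTriple n F0 F1 L) {j0 j1 : ℕ} (h0 : j0 ≤ n) (h1 : j1 ≤ n) :
    finrank ℂ ↥(F0 j0 ⊓ F1 j1) = j0 + j1 - n := by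
  have h := finrank_sup_add_finrank_inf_eq (F0 j0) (F1 j1)
  rw [hF0.2 j0 h0, hF1.2 j1 h1, (hF j0 j1 h0 h1).1] at h
  omega

lemma GenPosTriple.eq_zero_of_mem_of_mem (hF0 : IsCompleteFlag n F0) (hF1 : IsCompleteFlag n F1)
    (hF : GenPosTriple n F0 F1 L) {j0 j1 : ℕ} (h : j0 + j1 ≤ n) {x : Fin n → ℂ}
    (hx0 : x ∈ F0 j0) (hx1 : x ∈ F1 j1) : x = 0 := by
  have hbot : F0 j0 ⊓ F1 j1 = ⊥ := by
    rw [← finrank_eq_zero, hF.finrank_inf hF0 hF1 (by omega) (by omega)]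
    omega
  simpa [hbot] using mem_inf.2 ⟨hx0, hx1⟩

end GenPosTriple

/-- `e i` spans the line `F0 (i + 1) ⊓ F1 (n - i)`. -/
def IsAdaptedFamily (F0 F1 : ℕ → Submodule ℂ (Fin n → ℂ)) (e : Fin n → Fin n → ℂ) : Prop :=
  ∀ i : Fin n, e i ≠ 0 ∧ e i ∈ F0 (i + 1) ∧ e i ∈ F1 (n - i)

section IsAdaptedFamily

variable {F0 F1 : ℕ → Submodule ℂ (Fin n → ℂ)} {L : Submodule ℂ (Fin n → ℂ)}
  {e : Fin n → Fin n → ℂ}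

lemma GenPosTriple.exists_isAdaptedFamily (hF0 : IsCompleteFlag n F0)
    (hF1 : IsCompleteFlag n F1) (hF : GenPosTriple n F0 F1 L) :
    ∃ e, IsAdaptedFamily F0 F1 e := by
  have hline : ∀ i : Fin n, F0 (i + 1) ⊓ F1 (n - i) ≠ ⊥ := by
    intro i hbot
    have h := hF.finrank_inf hF0 hF1 (j0 := i + 1) (j1 := n - i) (by omega) (by omega)
    rw [hbot, finrank_bot] at h
    omega
  choose e he using fun i => exists_mem_ne_zero_of_ne_bot (hline i)
  exact ⟨e, fun i => ⟨(he i).2, mem_inf.1 (he i).1⟩⟩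

lemma IsAdaptedFamily.smul (he : IsAdaptedFamily F0 F1 e) {c : Fin n → ℂ} (hc : ∀ i, c i ≠ 0) :
    IsAdaptedFamily F0 F1 (fun i => c i • e i) := fun i =>
  ⟨smul_ne_zero (hc i) (he i).1, smul_mem _ _ (he i).2.1, smul_mem _ _ (he i).2.2⟩

lemma IsAdaptedFamily.spanFlag_eq_left (hF0 : IsCompleteFlag n F0) (hF1 : IsCompleteFlag n F1)
    (hF : GenPosTriple n F0 F1 L) (he : IsAdaptedFamily F0 F1 e) :
    ∀ k ≤ n, spanFlag ℂ e k = F0 k :=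
  hF0.spanFlag_eq (fun i => (he i).2.1) fun i hi =>
    (he i).1 (hF.eq_zero_of_mem_of_mem hF0 hF1 (by omega) hi (he i).2.2)

lemma IsAdaptedFamily.spanFlag_rev_eq_right (hF0 : IsCompleteFlag n F0)
    (hF1 : IsCompleteFlag n F1) (hF : GenPosTriple n F0 F1 L) (he : IsAdaptedFamily F0 F1 e) :
    ∀ k ≤ n, spanFlag ℂ (e ∘ Fin.rev) k = F1 k := by
  have hrev : ∀ i : Fin n, (Fin.rev i : ℕ) + 1 = n - i ∧ n - Fin.rev i = i + 1 := fun i => by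
    rw [Fin.val_rev]; omega
  refine hF1.spanFlag_eq (fun i => ?_) fun i hi => ?_
  · have hmem1 := (he (Fin.rev i)).2.2
    rwa [(hrev i).2] at hmem1
  · have hmem0 := (he (Fin.rev i)).2.1
    rw [(hrev i).1] at hmem0
    exact (he _).1 (hF.eq_zero_of_mem_of_mem hF0 hF1 (by omega) hmem0 hi)

lemma IsAdaptedFamily.exists_basis (hF0 : IsCompleteFlag n F0) (hF1 : IsCompleteFlag n F1)
    (hF : GenPosTriple n F0 F1 L) (he : IsAdaptedFamily F0 F1 e) :
    ∃ b : Basis (Fin n) ℂ (Fin n → ℂ), ⇑b = e := by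
  have htop : ⊤ ≤ span ℂ (Set.range e) := by
    rw [← spanFlag_self, he.spanFlag_eq_left hF0 hF1 hF n le_rfl]
    refine (eq_top_of_finrank_eq ?_).ge
    rw [hF0.2 n le_rfl, finrank_fin_fun]
  exact ⟨basisOfTopLeSpanOfCardEqFinrank e htop (by simp),
    coe_basisOfTopLeSpanOfCardEqFinrank e htop _⟩

/-- If the `i`-th coordinate of `v` vanished, `v` would lie in the hyperplane
`F0 i ⊔ F1 (n - 1 - i)` spanned by the other `b j`, against general position. -/
lemma IsAdaptedFamily.repr_ne_zero (hF0 : IsCompleteFlag n F0) (hF1 : IsCompleteFlag n F1)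
    {b : Basis (Fin n) ℂ (Fin n → ℂ)} (hb : IsAdaptedFamily F0 F1 b) {v : Fin n → ℂ}
    (hF : GenPosTriple n F0 F1 (span ℂ {v})) (i : Fin n) : b.repr v i ≠ 0 := by
  intro hzero
  have hle : span ℂ {v} ≤ F0 i ⊔ F1 (n - 1 - i) := by
    rw [span_singleton_le_iff_mem, ← b.sum_repr v]
    refine sum_mem fun j _ => ?_
    rcases lt_trichotomy j i with hji | rfl | hij
    · exact smul_mem _ _ (mem_sup_left (hF0.monotone (Nat.succ_le_of_lt hji) (hb j).2.1))
    · rw [hzero, zero_smul]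
      exact zero_mem _
    · refine smul_mem _ _ (mem_sup_right (hF1.monotone ?_ (hb j).2.2))
      have : (i : ℕ) < j := hij
      omega
  obtain ⟨hsup, hsupL⟩ := hF i (n - 1 - i) (by omega) (by omega)
  rw [sup_of_le_left hle, hsup] at hsupL
  omega

end IsAdaptedFamily

lemma GenPosTriple.exists_basis {F0 F1 : ℕ → Submodule ℂ (Fin n → ℂ)}
    {L : Submodule ℂ (Fin n → ℂ)} (hF0 : IsCompleteFlag n F0) (hF1 : IsCompleteFlag n F1)
    (hL : finrank ℂ L = 1) (hF : GenPosTriple n F0 F1 L) :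
    ∃ b : Basis (Fin n) ℂ (Fin n → ℂ), (∀ j ≤ n, spanFlag ℂ b j = F0 j) ∧
      (∀ j ≤ n, spanFlag ℂ (b ∘ Fin.rev) j = F1 j) ∧ span ℂ {∑ i, b i} = L := by
  obtain ⟨e, he⟩ := hF.exists_isAdaptedFamily hF0 hF1
  obtain ⟨b, rfl⟩ := he.exists_basis hF0 hF1 hF
  obtain ⟨v, hvL, hv0⟩ := exists_mem_ne_zero_of_ne_bot (p := L) (by rintro rfl; simp at hL)
  obtain rfl := eq_span_singleton_of_mem_of_finrank_eq_one hL hvL hv0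
  have hscaled := he.smul (he.repr_ne_zero hF0 hF1 hF)
  obtain ⟨b', hb'⟩ := hscaled.exists_basis hF0 hF1 hF
  refine ⟨b', hb' ▸ hscaled.spanFlag_eq_left hF0 hF1 hF,
    hb' ▸ hscaled.spanFlag_rev_eq_right hF0 hF1 hF, ?_⟩
  rw [hb', b.sum_repr v]

theorem stmt6 (n : ℕ) (F0 F1 G0 G1 : ℕ → Submodule ℂ (Fin n → ℂ))
    (L M : Submodule ℂ (Fin n → ℂ))
    (hF0 : IsCompleteFlag n F0) (hF1 : IsCompleteFlag n F1)
    (hG0 : IsCompleteFlag n G0) (hG1 : IsCompleteFlag n G1)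
    (hL : Module.finrank ℂ L = 1) (hM : Module.finrank ℂ M = 1)
    (hF : GenPosTriple n F0 F1 L) (hG : GenPosTriple n G0 G1 M) :
    ∃ g : (Fin n → ℂ) ≃ₗ[ℂ] (Fin n → ℂ),
      (∀ j ≤ n, (F0 j).map (g : (Fin n → ℂ) →ₗ[ℂ] (Fin n → ℂ)) = G0 j) ∧
      (∀ j ≤ n, (F1 j).map (g : (Fin n → ℂ) →ₗ[ℂ] (Fin n → ℂ)) = G1 j) ∧
      L.map (g : (Fin n → ℂ) →ₗ[ℂ] (Fin n → ℂ)) = M := by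
  obtain ⟨b, hb0, hb1, rfl⟩ := hF.exists_basis hF0 hF1 hL
  obtain ⟨c, hc0, hc1, rfl⟩ := hG.exists_basis hG0 hG1 hM
  let g := b.equiv c (Equiv.refl _)
  have hgb : ∀ i, g (b i) = c i := fun i => b.equiv_apply i c _
  have hgb' : ⇑(g : (Fin n → ℂ) →ₗ[ℂ] (Fin n → ℂ)) ∘ b = c := funext hgb
  refine ⟨g, fun j hj => ?_, fun j hj => ?_, ?_⟩
  · rw [← hb0 j hj, map_spanFlag, hgb', hc0 j hj]
  · rw [← hb1 j hj, map_spanFlag, ← Function.comp_assoc, hgb', hc1 j hj]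
  · rw [map_span, Set.image_singleton, map_sum]
    simp only [LinearEquiv.coe_coe, hgb]
end

section
/- The group generated by the translations $z \mapsto z + 2^k \cdot 3i$ and $z \mapsto z + 2^k(3\sqrt{3}/2 + 3i/2)$ for all $k \in \mathbb{Z}$ is dense in the additive group $(\mathbb{C}, +)$. -/
/-!
Multiplication by `2⁻ⁿ` makes the dyadic multiples of a single vector `v` accumulate at `0`, so
the closure of the group they generate contains the whole line `ℝ v`. The two generators
`3i` and `3√3/2 + 3i/2` span `ℂ` over `ℝ`, and a closed subgroup containing two spanning lines
is everything.
-/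

open Set

namespace AddSubgroup

theorem dense_of_forall_inv_two_pow_mem (H : AddSubgroup ℝ) (h : ∀ n : ℕ, ((2 : ℝ) ^ n)⁻¹ ∈ H) :
    Dense (H : Set ℝ) := by
  refine H.dense_of_not_isolated_zero fun ε hε => ?_
  obtain ⟨n, hn⟩ := exists_pow_lt_of_lt_one hε (by norm_num : (2 : ℝ)⁻¹ < 1)
  exact ⟨((2 : ℝ) ^ n)⁻¹, h n, by positivity, by rwa [← inv_pow]⟩

variable {E : Type*} [AddCommGroup E] [Module ℝ E] [TopologicalSpace E]
  [IsTopologicalAddGroup E] [ContinuousSMul ℝ E]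

theorem smul_mem_topologicalClosure_of_forall_inv_two_pow_smul_mem (G : AddSubgroup E) {v : E}
    (hv : ∀ n : ℕ, ((2 : ℝ) ^ n)⁻¹ • v ∈ G) (t : ℝ) : t • v ∈ G.topologicalClosure := by
  let line : ℝ →+ E := (LinearMap.toSpanSingleton ℝ E v).toAddMonoidHom
  have hline : Continuous line := continuous_id.smul continuous_const
  let H : AddSubgroup ℝ := G.topologicalClosure.comap line
  have hH_closed : IsClosed (H : Set ℝ) := G.isClosed_topologicalClosure.preimage hline
  have hH_dense : Dense (H : Set ℝ) :=
    H.dense_of_forall_inv_two_pow_mem fun n => G.le_topologicalClosure (hv n)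
  have hH : (H : Set ℝ) = univ := hH_closed.closure_eq ▸ hH_dense.closure_eq
  have ht : t ∈ (H : Set ℝ) := hH ▸ mem_univ t
  exact ht

theorem dense_of_span_eq_top (G : AddSubgroup E) {s : Set E}
    (hs : ∀ v ∈ s, ∀ n : ℕ, ((2 : ℝ) ^ n)⁻¹ • v ∈ G) (hspan : Submodule.span ℝ s = ⊤) :
    Dense (G : Set E) := by
  have hsmul : ∀ x ∈ Submodule.span ℝ s, ∀ t : ℝ, t • x ∈ G.topologicalClosure := by
    intro x hx
    induction hx using Submodule.span_induction with
    | mem v hv => exact G.smul_mem_topologicalClosure_of_forall_inv_two_pow_smul_mem (hs v hv)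
    | zero => simp
    | add x y _ _ hx hy => exact fun t => smul_add t x y ▸ add_mem (hx t) (hy t)
    | smul c x _ hx => exact fun t => smul_smul t c x ▸ hx (t * c)
  refine dense_iff_closure_eq.2 (eq_univ_of_forall fun x => ?_)
  have hx := hsmul x (hspan ▸ Submodule.mem_top) 1
  rw [one_smul] at hx
  exact hx

end AddSubgroup

theorem Complex.span_three_mul_I_eq_top :
    Submodule.span ℝ {3 * I, 3 * (Real.sqrt 3 : ℂ) / 2 + 3 / 2 * I} = ⊤ := by
  refine Submodule.eq_top_iff'.2 fun z => ?_
  -- Solve `re z = 3√3 t / 2` and `im z = 3 s + 3 t / 2`.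
  set t : ℝ := 2 * z.re * Real.sqrt 3 / 9
  set s : ℝ := z.im / 3 - t / 2
  have hsqrt : ((Real.sqrt 3 : ℝ) : ℂ) ^ 2 = 3 := by
    rw [← ofReal_pow, Real.sq_sqrt (by norm_num)]; norm_num
  have hz : z = s • (3 * I) + t • (3 * (Real.sqrt 3 : ℂ) / 2 + 3 / 2 * I) := by
    simp only [real_smul, s, t]
    push_cast
    linear_combination (re_add_im z).symm - ((z.re : ℂ) / 3) * hsqrt
  rw [hz]
  exact add_mem (Submodule.smul_mem _ _ (Submodule.subset_span (mem_insert _ _)))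
    (Submodule.smul_mem _ _ (Submodule.subset_span (mem_insert_of_mem _ rfl)))

theorem stmt10 :
    Dense ((AddSubgroup.closure
      {c : ℂ | ∃ k : ℤ, c = (2 : ℂ) ^ k * (3 * Complex.I) ∨
        c = (2 : ℂ) ^ k * (3 * (Real.sqrt 3 : ℂ) / 2 + 3 / 2 * Complex.I)} :
      AddSubgroup ℂ) : Set ℂ) := by
  refine AddSubgroup.dense_of_span_eq_top _ ?_ Complex.span_three_mul_I_eq_top
  rintro v hv n
  have hdyadic : ((2 : ℝ) ^ n)⁻¹ • v = (2 : ℂ) ^ (-(n : ℤ)) * v := by simp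
  rw [hdyadic]
  rcases hv with rfl | rfl
  exacts [AddSubgroup.subset_closure ⟨_, Or.inl rfl⟩, AddSubgroup.subset_closure ⟨_, Or.inr rfl⟩]
end
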